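/- arXiv:2203.10070 — 2 statements merged into one kernel-verified Lean document; each statement's English description precedes it below -/
import Mathlib

section
/- Let T be a tree on a vertex set A with |A| ≥ 2, let y be a vertex not in A, and let G be a simple graph on vertex set A ∪ {y} such that every edge of T is an edge of G and every leaf of T is adjacent to y in G. Then G has no cut vertex; that is, for every vertex v of G, the graph G − v is connected. -/
/-!
Deleting the apex `y` leaves a graph containing the spanning tree `T`. Deleting a vertex `a` of
`T` leaves every other vertex `u` of `T` joined to a leaf of `T` inside `T - a`: walk away from
`a` as far as possible; a vertex of degree at least two always has a neighbour farther from `a`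
than itself, so the walk stops at a leaf, which is adjacent to `y`.
-/

namespace SimpleGraph

variable {V : Type*} {G : SimpleGraph V}

lemma IsAcyclic.eq_penultimate_of_adj_of_dist_lt (hG : G.IsAcyclic) {a u v : V}
    {p : G.Walk a u} (hp : p.IsPath) (hadj : G.Adj u v) (hv : G.dist a v < G.dist a u) :
    v = p.penultimate := by
  classical
  obtain ⟨q, hq, hq_len⟩ := (p.reachable.trans hadj.reachable).exists_path_of_dist
  have hu : u ∉ q.support := fun hu => by
    have := G.dist_le (q.takeUntil u hu)
    have := q.length_takeUntil_le_length hu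
    omega
  exact hG.eq_penultimate_of_adj_end hp hadj
    (hG.mem_support_of_ne_mem_support_of_adj_of_isPath hp hq hadj hu)

lemma IsTree.exists_adj_dist_lt_of_two_le_degree (hG : G.IsTree) (a : V) {u : V}
    [Fintype (G.neighborSet u)] (hu : 2 ≤ G.degree u) :
    ∃ v, G.Adj u v ∧ G.dist a u < G.dist a v := by
  obtain ⟨p, hp⟩ := (hG.connected a u).exists_isPath
  obtain ⟨v, hv, hv_ne⟩ := Finset.exists_mem_ne (s := G.neighborFinset u)
    (by rwa [card_neighborFinset_eq_degree]) p.penultimate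
  rw [mem_neighborFinset] at hv
  refine ⟨v, hv, ?_⟩
  rcases hG.dist_eq_dist_add_one_of_adj a hv with h | h
  · exact absurd (hG.isAcyclic.eq_penultimate_of_adj_of_dist_lt hp hv (by omega)) hv_ne
  · omega

lemma IsTree.exists_degree_le_one_reachable_induce_compl_singleton [Fintype V]
    [DecidableRel G.Adj] (hG : G.IsTree) (a : V) (u : ({a}ᶜ : Set V)) :
    ∃ ℓ : ({a}ᶜ : Set V), G.degree ℓ ≤ 1 ∧ (G.induce {a}ᶜ).Reachable u ℓ := by
  classical
  obtain ⟨ℓ, hℓ_reach, hℓ_max⟩ := Finset.exists_max_image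
    (Finset.univ.filter ((G.induce {a}ᶜ).Reachable u)) (fun w => G.dist a w) ⟨u, by simp⟩
  rw [Finset.mem_filter] at hℓ_reach
  refine ⟨ℓ, not_lt.mp fun hdeg => ?_, hℓ_reach.2⟩
  obtain ⟨v, hadj, hlt⟩ := hG.exists_adj_dist_lt_of_two_le_degree a hdeg
  have hva : v ∈ ({a}ᶜ : Set V) := by
    rintro rfl
    simp at hlt
  have hv_reach : (G.induce {a}ᶜ).Reachable u ⟨v, hva⟩ := hℓ_reach.2.trans (Adj.reachable hadj)
  have : G.dist a v ≤ G.dist a ℓ :=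
    hℓ_max ⟨v, hva⟩ (Finset.mem_filter.2 ⟨Finset.mem_univ _, hv_reach⟩)
  omega

end SimpleGraph

open SimpleGraph

theorem tree_plus_apex_no_cut_vertex_general
    {A : Type*} [Fintype A]
    (T : SimpleGraph A) [DecidableRel T.Adj] (hT : T.IsTree)
    (G : SimpleGraph (Option A))
    (hTG : ∀ u v : A, T.Adj u v → G.Adj (some u) (some v))
    (hleaf : ∀ ℓ : A, T.degree ℓ ≤ 1 → G.Adj (some ℓ) none) :
    ∀ v : Option A, (G.induce {w : Option A | w ≠ v}).Connected := by
  rintro (_ | a)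
  · let φ : T →g G.induce {w | w ≠ none} := ⟨fun u => ⟨some u, Option.some_ne_none u⟩, hTG _ _⟩
    refine hT.connected.map φ ?_
    rintro ⟨_ | u, hu⟩
    · exact absurd rfl hu
    · exact ⟨u, rfl⟩
  · let ψ : T.induce {a}ᶜ →g G.induce {w | w ≠ some a} :=
      ⟨fun u => ⟨some u, fun h => u.2 (Option.some_injective _ h)⟩, hTG _ _⟩
    have hnone : none ∈ {w | w ≠ some a} := (Option.some_ne_none a).symm
    refine (connected_iff_exists_forall_reachable _).2 ⟨⟨none, hnone⟩, ?_⟩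
    rintro ⟨_ | u, hu⟩
    · rfl
    · obtain ⟨ℓ, hℓ, hreach⟩ := hT.exists_degree_le_one_reachable_induce_compl_singleton a
        ⟨u, fun h => hu (congrArg some h)⟩
      have hℓ_none : (G.induce {w | w ≠ some a}).Adj ⟨none, hnone⟩ (ψ ℓ) := (hleaf ℓ hℓ).symm
      exact hℓ_none.reachable.trans (hreach.map ψ).symm

/-- Let `T` be a tree on a vertex set `A` with at least two vertices, let `y` be a new
vertex (`none` in `Option A`), and let `G` be a simple graph on `A ∪ {y}` containing all
edges of `T` and an edge from every leaf of `T` to `y`. Then `G` has no cut vertex: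
deleting any single vertex leaves a connected graph. -/
theorem tree_plus_apex_no_cut_vertex
    {A : Type*} [Fintype A] [DecidableEq A]
    (T : SimpleGraph A) [DecidableRel T.Adj] (hT : T.IsTree) (hA : 2 ≤ Fintype.card A)
    (G : SimpleGraph (Option A))
    (hTG : ∀ u v : A, T.Adj u v → G.Adj (some u) (some v))
    (hleaf : ∀ ℓ : A, T.degree ℓ ≤ 1 → G.Adj (some ℓ) none) :
    ∀ v : Option A, (G.induce {w : Option A | w ≠ v}).Connected :=
  tree_plus_apex_no_cut_vertex_general T hT G hTG hleaf
end

section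
/- Let G be a finite simple graph, let B be a 2-connected induced subgraph of G with at least 3 vertices, and let H be a connected subgraph of G vertex-disjoint from B. If at least three vertices of B have a neighbour in H, then G contains a K₄ minor model: four pairwise disjoint nonempty vertex sets W₁, W₂, W₃, W₄, each inducing a connected subgraph of G, such that for every pair i ≠ j there is an edge of G between Wᵢ and Wⱼ. -/
/-!
`H` itself is the fourth branch set, so it suffices to find inside `B` three disjoint connected,
pairwise adjacent sets containing `v₁`, `v₂`, `v₃`. Take a path `P` from `v₁` to `v₂` in `B - v₃`,
a walk from `v₃` in `B` first meeting `P` at `x`, and a walk from `v₃` in `B - x` first meeting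
`P` at some `y ≠ x`. The vertices of the two walks before they reach `P` form a connected set
containing `v₃` and adjacent to both `x` and `y`; cutting `P` between `x` and `y` gives the other
two sets.
-/

open Function

namespace SimpleGraph

variable {V : Type*} {G : SimpleGraph V}

def Touches (G : SimpleGraph V) (s t : Set V) : Prop :=
  ∃ a ∈ s, ∃ b ∈ t, G.Adj a b

lemma Touches.symm {s t : Set V} (h : G.Touches s t) : G.Touches t s := by
  obtain ⟨a, ha, b, hb, hab⟩ := h
  exact ⟨b, hb, a, ha, hab.symm⟩

lemma Touches.mono {s s' t t' : Set V} (h : G.Touches s t) (hs : s ⊆ s') (ht : t ⊆ t') :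
    G.Touches s' t' := by
  obtain ⟨a, ha, b, hb, hab⟩ := h
  exact ⟨a, hs ha, b, ht hb, hab⟩

structure IsCliqueMinorModel (G : SimpleGraph V) {n : ℕ} (W : Fin n → Set V) : Prop where
  connected (i : Fin n) : (G.induce (W i)).Connected
  pairwise_disjoint : Pairwise (Disjoint on W)
  pairwise_touches : Pairwise (G.Touches on W)

lemma IsCliqueMinorModel.nonempty {n : ℕ} {W : Fin n → Set V} (hW : G.IsCliqueMinorModel W)
    (i : Fin n) : (W i).Nonempty :=
  Set.nonempty_coe_sort.mp (hW.connected i).nonempty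

lemma IsCliqueMinorModel.vecCons {n : ℕ} {W : Fin n → Set V} (hW : G.IsCliqueMinorModel W)
    {X : Set V} (hX : (G.induce X).Connected) (hdisj : ∀ i, Disjoint X (W i))
    (htouch : ∀ i, G.Touches X (W i)) : G.IsCliqueMinorModel (Matrix.vecCons X W) where
  connected i := Fin.cases hX hW.connected i
  pairwise_disjoint := pairwise_fin_succ_iff.mpr
    ⟨fun i => (hdisj i).symm, hdisj, hW.pairwise_disjoint⟩
  pairwise_touches := pairwise_fin_succ_iff.mpr
    ⟨fun i => (htouch i).symm, htouch, hW.pairwise_touches⟩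

lemma isCliqueMinorModel_triple {W₁ W₂ W₃ : Set V} (h₁ : (G.induce W₁).Connected)
    (h₂ : (G.induce W₂).Connected) (h₃ : (G.induce W₃).Connected)
    (d₁₂ : Disjoint W₁ W₂) (d₁₃ : Disjoint W₁ W₃) (d₂₃ : Disjoint W₂ W₃)
    (t₁₂ : G.Touches W₁ W₂) (t₁₃ : G.Touches W₁ W₃) (t₂₃ : G.Touches W₂ W₃) :
    G.IsCliqueMinorModel ![W₁, W₂, W₃] :=
  (((⟨finZeroElim, Subsingleton.pairwise, Subsingleton.pairwise⟩ :
    G.IsCliqueMinorModel ![]).vecCons h₃ finZeroElim finZeroElim).vecCons h₂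
    (Fin.forall_fin_one.mpr d₂₃) (Fin.forall_fin_one.mpr t₂₃)).vecCons h₁
    (Fin.forall_fin_two.mpr ⟨d₁₂, d₁₃⟩) (Fin.forall_fin_two.mpr ⟨t₁₂, t₁₃⟩)

lemma exists_isPath_of_connected_induce {s : Set V} (hs : (G.induce s).Connected) {a b : V}
    (ha : a ∈ s) (hb : b ∈ s) : ∃ p : G.Walk a b, p.IsPath ∧ {z | z ∈ p.support} ⊆ s := by
  classical
  obtain ⟨q⟩ := hs.preconnected ⟨a, ha⟩ ⟨b, hb⟩
  have hsupp : ∀ z ∈ (q.bypass.map (Embedding.induce s).toHom).support, z ∈ s := by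
    intro z hz
    rw [Walk.support_map, List.mem_map] at hz
    obtain ⟨⟨z, hz⟩, -, rfl⟩ := hz
    exact hz
  exact ⟨_, q.bypass_isPath.map (Embedding.induce (G := G) s).injective, hsupp⟩

lemma Walk.exists_connected_touches_of_notMem_of_mem {S : Set V} {a b : V} (p : G.Walk a b)
    (ha : a ∉ S) (hb : b ∈ S) :
    ∃ x ∈ S, x ∈ p.support ∧ ∃ U ⊆ {z | z ∈ p.support}, Disjoint U S ∧ a ∈ U ∧
      (G.induce U).Connected ∧ G.Touches U {x} := by
  induction p with
  | nil => exact absurd hb ha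
  | @cons a c b hac p ih =>
    by_cases hc : c ∈ S
    · refine ⟨c, hc, by simp, {a}, by simp, Set.disjoint_singleton_left.mpr ha, rfl,
        Connected.of_subsingleton, a, rfl, c, rfl, hac⟩
    · obtain ⟨x, hxS, hxp, U, hUp, hUS, hcU, hU, hUx⟩ := ih hc hb
      refine ⟨x, hxS, by simp [hxp], {a} ∪ U, ?_, ?_, Or.inl rfl,
        connected_induce_union Connected.of_subsingleton.preconnected hU.preconnected rfl hcU hac,
        hUx.mono Set.subset_union_right subset_rfl⟩
      · exact Set.union_subset (by simp) (hUp.trans fun z hz => by simp_all)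
      · exact Set.disjoint_union_left.mpr ⟨Set.disjoint_singleton_left.mpr ha, hUS⟩

lemma Walk.IsPath.exists_separating_split {u w x y : V} {p : G.Walk u w} (hp : p.IsPath)
    (hx : x ∈ p.support) (hy : y ∈ p.support) (hxy : x ≠ y) :
    ∃ W₁ W₂ : Set V, W₁ ⊆ {z | z ∈ p.support} ∧ W₂ ⊆ {z | z ∈ p.support} ∧ u ∈ W₁ ∧ w ∈ W₂ ∧
      (G.induce W₁).Connected ∧ (G.induce W₂).Connected ∧ Disjoint W₁ W₂ ∧
      G.Touches W₁ W₂ ∧ ((x ∈ W₁ ∧ y ∈ W₂) ∨ (y ∈ W₁ ∧ x ∈ W₂)) := by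
  induction p with
  | nil => simp_all
  | @cons u v w huv p ih =>
    rw [Walk.cons_isPath_iff] at hp
    have hsub : {z | z ∈ p.support} ⊆ {z | z ∈ (Walk.cons huv p).support} := fun z hz => by
      simp_all
    have hu : u ∉ {z | z ∈ p.support} := hp.2
    by_cases hxy_u : x = u ∨ y = u
    · refine ⟨{u}, {z | z ∈ p.support}, by simp, hsub, rfl, p.end_mem_support,
        Connected.of_subsingleton, p.connected_induce_support,
        Set.disjoint_singleton_left.mpr hu, ⟨u, rfl, v, p.start_mem_support, huv⟩, ?_⟩
      rcases hxy_u with rfl | rfl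
      · exact Or.inl ⟨rfl, by simpa [Ne.symm hxy] using hy⟩
      · exact Or.inr ⟨rfl, by simpa [hxy] using hx⟩
    · rw [not_or] at hxy_u
      obtain ⟨W₁, W₂, hW₁p, hW₂p, hvW₁, hwW₂, hW₁, hW₂, hd, ht, hsep⟩ :=
        ih hp.1 (by simpa [hxy_u.1] using hx) (by simpa [hxy_u.2] using hy)
      refine ⟨{u} ∪ W₁, W₂, Set.union_subset (by simp) (hW₁p.trans hsub), hW₂p.trans hsub,
        Or.inl rfl, hwW₂,
        connected_induce_union Connected.of_subsingleton.preconnected hW₁.preconnected rfl hvW₁ huv,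
        hW₂, Set.disjoint_union_left.mpr ⟨Set.disjoint_singleton_left.mpr fun h => hu (hW₂p h), hd⟩,
        ht.mono Set.subset_union_right subset_rfl, ?_⟩
      rcases hsep with ⟨hx, hy⟩ | ⟨hy, hx⟩
      · exact Or.inl ⟨Or.inr hx, hy⟩
      · exact Or.inr ⟨Or.inr hy, hx⟩

theorem exists_rooted_triangle_model {B : Set V} (hBconn : (G.induce B).Connected)
    (hB2conn : ∀ w ∈ B, (G.induce (B \ {w})).Connected) {v₁ v₂ v₃ : V}
    (hv₁ : v₁ ∈ B) (hv₂ : v₂ ∈ B) (hv₃ : v₃ ∈ B) (h12 : v₁ ≠ v₂) (h13 : v₁ ≠ v₃)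
    (h23 : v₂ ≠ v₃) :
    ∃ W₁ W₂ W₃ : Set V, W₁ ⊆ B ∧ W₂ ⊆ B ∧ W₃ ⊆ B ∧ v₁ ∈ W₁ ∧ v₂ ∈ W₂ ∧ v₃ ∈ W₃ ∧
      G.IsCliqueMinorModel ![W₁, W₂, W₃] := by
  obtain ⟨P, hP, hPB⟩ :=
    exists_isPath_of_connected_induce (hB2conn v₃ hv₃) ⟨hv₁, h13⟩ ⟨hv₂, h23⟩
  set S := {z | z ∈ P.support}
  have hv₃S : v₃ ∉ S := fun h => (hPB h).2 rfl
  obtain ⟨Q, -, hQB⟩ := exists_isPath_of_connected_induce hBconn hv₃ hv₁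
  obtain ⟨x, hxS, hxQ, U, hUQ, hUS, hv₃U, hU, hUx⟩ :=
    Q.exists_connected_touches_of_notMem_of_mem hv₃S P.start_mem_support
  obtain ⟨t, htS, htx⟩ : ∃ t ∈ S, t ≠ x := by
    by_cases hx : x = v₁
    · exact ⟨v₂, P.end_mem_support, fun h => h12 (hx ▸ h).symm⟩
    · exact ⟨v₁, P.start_mem_support, Ne.symm hx⟩
  obtain ⟨R, -, hRB⟩ := exists_isPath_of_connected_induce (hB2conn x (hQB hxQ))
    ⟨hv₃, fun h => hv₃S (h ▸ hxS)⟩ ⟨(hPB htS).1, htx⟩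
  obtain ⟨y, hyS, hyR, U', hU'R, hU'S, hv₃U', hU', hU'y⟩ :=
    R.exists_connected_touches_of_notMem_of_mem hv₃S htS
  have hyx : y ≠ x := (hRB hyR).2
  obtain ⟨W₁, W₂, hW₁S, hW₂S, hv₁W₁, hv₂W₂, hW₁, hW₂, d₁₂, t₁₂, hsep⟩ :=
    hP.exists_separating_split hxS hyS hyx.symm
  have hW₃ : (G.induce (U ∪ U')).Connected :=
    induce_union_connected hU.preconnected hU'.preconnected ⟨v₃, hv₃U, hv₃U'⟩
  have disjoint_W₃ {W : Set V} (hW : W ⊆ S) : Disjoint W (U ∪ U') :=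
    (Set.disjoint_union_left.mpr ⟨hUS, hU'S⟩).symm.mono_left hW
  have touches_W₃ {W : Set V} (hW : x ∈ W ∨ y ∈ W) : G.Touches W (U ∪ U') := by
    rcases hW with hx | hy
    · exact (hUx.mono Set.subset_union_left (Set.singleton_subset_iff.mpr hx)).symm
    · exact (hU'y.mono Set.subset_union_right (Set.singleton_subset_iff.mpr hy)).symm
  refine ⟨W₁, W₂, U ∪ U', hW₁S.trans fun z hz => (hPB hz).1, hW₂S.trans fun z hz => (hPB hz).1,
    Set.union_subset (hUQ.trans hQB) (hU'R.trans fun z hz => (hRB hz).1), hv₁W₁, hv₂W₂,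
    Or.inl hv₃U, isCliqueMinorModel_triple hW₁ hW₂ hW₃ d₁₂ (disjoint_W₃ hW₁S)
      (disjoint_W₃ hW₂S) t₁₂ (touches_W₃ ?_) (touches_W₃ ?_)⟩
  · exact hsep.imp And.left And.left
  · exact hsep.symm.imp And.right And.right

end SimpleGraph

theorem triple_attachment_to_biconnected_gives_K4_minor_general
    {V : Type*} (G : SimpleGraph V)
    (B H : Set V)
    (hBconn : (G.induce B).Connected)
    (hB2conn : ∀ w ∈ B, (G.induce (B \ {w})).Connected)
    (hHconn : (G.induce H).Connected)
    (hdisj : Disjoint B H)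
    (v₁ v₂ v₃ : V) (hv₁ : v₁ ∈ B) (hv₂ : v₂ ∈ B) (hv₃ : v₃ ∈ B)
    (h12 : v₁ ≠ v₂) (h13 : v₁ ≠ v₃) (h23 : v₂ ≠ v₃)
    (hn₁ : ∃ h ∈ H, G.Adj v₁ h) (hn₂ : ∃ h ∈ H, G.Adj v₂ h) (hn₃ : ∃ h ∈ H, G.Adj v₃ h) :
    ∃ W : Fin 4 → Set V,
      (∀ i, (W i).Nonempty) ∧
      (∀ i, (G.induce (W i)).Connected) ∧
      (∀ i j, i ≠ j → Disjoint (W i) (W j)) ∧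
      (∀ i j, i ≠ j → ∃ a ∈ W i, ∃ b ∈ W j, G.Adj a b) := by
  obtain ⟨W₁, W₂, W₃, hW₁B, hW₂B, hW₃B, hvW₁, hvW₂, hvW₃, hW⟩ :=
    SimpleGraph.exists_rooted_triangle_model hBconn hB2conn hv₁ hv₂ hv₃ h12 h13 h23
  have H_touches {W : Set V} {v : V} (hvW : v ∈ W) (hn : ∃ h ∈ H, G.Adj v h) :
      G.Touches H W := by
    obtain ⟨h, hh, hvh⟩ := hn
    exact ⟨h, hh, v, hvW, hvh.symm⟩
  have on_triangle {p : Set V → Prop} (h₁ : p W₁) (h₂ : p W₂) (h₃ : p W₃) :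
      ∀ i, p (![W₁, W₂, W₃] i) := by
    intro i
    fin_cases i <;> assumption
  have hK₄ := hW.vecCons hHconn
    (on_triangle (hdisj.mono_left hW₁B).symm (hdisj.mono_left hW₂B).symm
      (hdisj.mono_left hW₃B).symm)
    (on_triangle (H_touches hvW₁ hn₁) (H_touches hvW₂ hn₂) (H_touches hvW₃ hn₃))
  exact ⟨_, hK₄.nonempty, hK₄.connected, fun _ _ h => hK₄.pairwise_disjoint h,
    fun _ _ h => hK₄.pairwise_touches h⟩

/-- If `B` is a 2-connected induced subgraph of `G` (at least 3 vertices) and `H` is a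
connected subgraph of `G` vertex-disjoint from `B` such that at least three vertices of
`B` have a neighbour in `H`, then `G` contains a `K₄` minor model. -/
theorem triple_attachment_to_biconnected_gives_K4_minor
    {V : Type*} [Fintype V] [DecidableEq V] (G : SimpleGraph V)
    (B H : Set V)
    (hBcard : 3 ≤ B.ncard)
    (hBconn : (G.induce B).Connected)
    (hB2conn : ∀ w ∈ B, (G.induce (B \ {w})).Connected)
    (hHconn : (G.induce H).Connected)
    (hdisj : Disjoint B H)
    (v₁ v₂ v₃ : V) (hv₁ : v₁ ∈ B) (hv₂ : v₂ ∈ B) (hv₃ : v₃ ∈ B)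
    (h12 : v₁ ≠ v₂) (h13 : v₁ ≠ v₃) (h23 : v₂ ≠ v₃)
    (hn₁ : ∃ h ∈ H, G.Adj v₁ h) (hn₂ : ∃ h ∈ H, G.Adj v₂ h) (hn₃ : ∃ h ∈ H, G.Adj v₃ h) :
    ∃ W : Fin 4 → Set V,
      (∀ i, (W i).Nonempty) ∧
      (∀ i, (G.induce (W i)).Connected) ∧
      (∀ i j, i ≠ j → Disjoint (W i) (W j)) ∧
      (∀ i j, i ≠ j → ∃ a ∈ W i, ∃ b ∈ W j, G.Adj a b) :=
  triple_attachment_to_biconnected_gives_K4_minor_general G B H hBconn hB2conn hHconn hdisj v₁ v₂ v₃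
    hv₁ hv₂ hv₃ h12 h13 h23 hn₁ hn₂ hn₃
end
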